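/- Suppose at a KKT point the identities V = α p^H h^H / T hold with T = |h p|² α + r, and the precoder p satisfies (βI + A)p = q as in Theorem 1, where β = (1/E)·∑ η b |V|² and Tr(P P^H) = E. Then taking traces of the two stationarity relations—one obtained by multiplying the receiver stationarity equation by V* η b and summing, the other by pre-multiplying the precoder stationarity equation by p^H and summing over clusters—yields equal left-hand sides, which forces β · Tr(P P^H) = ∑_{k,l,i} η_{k,i→l} b_{k,i→l} |V_{k,i→l}|², i.e., the formula β = E^{-1} ∑ η b |V|². -/

import Mathlib

/-!
Multiply the receiver equation (36) by `η b conj V` and sum over all links, and pair the precoder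
equation (38) with `conj p_k` and sum over clusters. Both give the same weighted sum
`∑ η b conj(h p) conj V α`; expanding, the desired-signal and interference terms agree on the two
sides (for the interference terms after exchanging the roles of `k` and `t`), so what is left is
`∑ η b |V|² = β ∑ |p|² = β E`.
-/

open Finset

lemma sum_star_mul_sum_comm {ι n R : Type*} [Fintype n] [NonUnitalNonAssocSemiring R] [Star R]
    (s : Finset ι) (p : n → R) (f : ι → n → R) :
    ∑ m, star (p m) * ∑ x ∈ s, f x m = ∑ x ∈ s, ∑ m, star (p m) * f x m := by
  simp only [mul_sum]; exact sum_comm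

lemma sum_star_mul_mul_star {n R : Type*} [Fintype n] [CommSemiring R] [StarRing R]
    (p u : n → R) (a c d : R) :
    ∑ m, star (p m) * (a * star (u m) * c * d) = a * star (∑ m, u m * p m) * c * d := by
  simp only [star_sum, star_mul', mul_sum, sum_mul]
  exact sum_congr rfl fun m _ => by ring

lemma sum_filter_ne_comm {ι M : Type*} [Fintype ι] [DecidableEq ι] [AddCommMonoid M]
    (g : ι → ι → M) :
    ∑ k, ∑ t ∈ univ.filter (· ≠ k), g t k = ∑ k, ∑ t ∈ univ.filter (· ≠ k), g k t := by
  simp only [sum_filter]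
  rw [sum_comm]
  simp only [ne_comm]

section

variable {K L M : ℕ}

def linkSum (f : Fin K → Fin L → Fin L → ℂ) : ℂ :=
  ∑ k, ∑ l, ∑ i ∈ univ.filter (l ≤ ·), f k i l

variable (α : Fin K → Fin L → ℝ) (h : Fin K → Fin L → Fin M → ℂ) (p : Fin K → Fin M → ℂ)
  (V : Fin K → Fin L → Fin L → ℂ) (b η : Fin K → Fin L → Fin L → ℝ)

lemma linkSum_receiver_trace (A : Fin K → Fin L → ℂ) (I : Fin K → Fin L → ℂ)
    (hrx : ∀ k l i, l ≤ i →
      (α k l : ℂ) * star (∑ m, h k i m * p k m)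
        = A k l * (Complex.normSq (∑ m, h k i m * p k m) : ℂ) * V k i l + I k i * V k i l
          + V k i l) :
    linkSum (fun k i l => (η k i l : ℂ) * b k i l * star (∑ m, h k i m * p k m)
        * star (V k i l) * α k l)
      = linkSum (fun k i l => (η k i l : ℂ) * b k i l * A k l
          * Complex.normSq (∑ m, h k i m * p k m) * Complex.normSq (V k i l))
        + linkSum (fun k i l => (η k i l : ℂ) * b k i l * I k i * Complex.normSq (V k i l))
        + linkSum (fun k i l => (η k i l : ℂ) * b k i l * Complex.normSq (V k i l)) := by
  simp only [linkSum, ← sum_add_distrib]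
  refine sum_congr rfl fun k _ => sum_congr rfl fun l _ => sum_congr rfl fun i hi => ?_
  calc _ = (η k i l : ℂ) * b k i l * star (V k i l) * (α k l * star (∑ m, h k i m * p k m)) := by
        ring
    _ = _ := by
      rw [hrx k l i (mem_filter.mp hi).2, ← Complex.mul_conj, ← Complex.mul_conj]
      simp only [Complex.star_def]
      ring

lemma linkSum_precoder_trace (β E : ℝ)
    (hpow : ∑ k, ∑ m, Complex.normSq (p k m) = E)
    (heq38 : ∀ k m,
      ∑ l, ∑ i ∈ univ.filter (fun i => l ≤ i),
          (η k i l : ℂ) * (b k i l : ℂ) * (starRingEnd ℂ) (h k i m)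
            * (starRingEnd ℂ) (V k i l) * (α k l : ℂ)
        = (∑ l, ∑ i ∈ univ.filter (fun i => l ≤ i), ∑ j ∈ univ.filter (fun j => l ≤ j),
              (α k j : ℂ) * (η k i l : ℂ) * (b k i l : ℂ) * (starRingEnd ℂ) (h k i m)
                * (Complex.normSq (V k i l) : ℂ) * (∑ m', h k i m' * p k m'))
          + (∑ t ∈ univ.filter (fun t => t ≠ k), ∑ l, ∑ i ∈ univ.filter (fun i => l ≤ i),
              (η t i l : ℂ) * (b t i l : ℂ) * (starRingEnd ℂ) (h t i m)
                * (Complex.normSq (V t i l) : ℂ) * (∑ m', h t i m' * p k m'))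
          + (β : ℂ) * p k m) :
    linkSum (fun k i l => (η k i l : ℂ) * b k i l * star (∑ m, h k i m * p k m)
        * star (V k i l) * α k l)
      = linkSum (fun k i l => (η k i l : ℂ) * b k i l * (∑ j ∈ univ.filter (l ≤ ·), (α k j : ℂ))
          * Complex.normSq (∑ m, h k i m * p k m) * Complex.normSq (V k i l))
        + linkSum (fun k i l => (η k i l : ℂ) * b k i l
          * (∑ t ∈ univ.filter (· ≠ k), (Complex.normSq (∑ m, h k i m * p t m) : ℂ))
          * Complex.normSq (V k i l))
        + β * E := by
  have hpaired := fun k => sum_congr rfl fun m (_ : m ∈ univ) =>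
    congrArg (star (p k m) * ·) (heq38 k m)
  simp only [starRingEnd_apply, mul_add, sum_add_distrib, sum_star_mul_sum_comm,
    sum_star_mul_mul_star] at hpaired
  have htrace := sum_congr rfl fun k (_ : k ∈ univ) => hpaired k
  simp only [sum_add_distrib] at htrace
  simp only [linkSum]
  rw [htrace]
  congr 1; congr 1
  · refine sum_congr rfl fun k _ => sum_congr rfl fun l _ => sum_congr rfl fun i _ => ?_
    rw [mul_sum, sum_mul, sum_mul]
    refine sum_congr rfl fun j _ => ?_
    rw [Complex.normSq_eq_conj_mul_self (z := ∑ m, h k i m * p k m), ← starRingEnd_apply]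
    ring
  · rw [sum_filter_ne_comm]
    refine sum_congr rfl fun k _ => ?_
    rw [sum_comm]
    refine sum_congr rfl fun l _ => ?_
    rw [sum_comm]
    refine sum_congr rfl fun i _ => ?_
    rw [mul_sum, sum_mul]
    refine sum_congr rfl fun t _ => ?_
    rw [Complex.normSq_eq_conj_mul_self (z := ∑ m, h k i m * p t m), ← starRingEnd_apply]
    ring
  · simp only [mul_left_comm _ (β : ℂ), ← mul_sum, ← hpow, Complex.ofReal_sum,
      Complex.normSq_eq_conj_mul_self, starRingEnd_apply]

end

theorem stmt_18_general (K L M : ℕ)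
    (α : Fin K → Fin L → ℝ)
    (h : Fin K → Fin L → Fin M → ℂ) (p : Fin K → Fin M → ℂ)
    (V : Fin K → Fin L → Fin L → ℂ)
    (b η : Fin K → Fin L → Fin L → ℝ)
    (E β : ℝ) (hE : 0 < E)
    -- total power constraint Tr(P Pᴴ) = E
    (hpow : ∑ k, ∑ m, Complex.normSq (p k m) = E)
    -- receiver stationarity equation (36):
    -- α_{k,l} p_kᴴ h_{k,i}ᴴ = (∑_{j=l}^{L} α_{k,j}) |h_{k,i} p_k|² V + (∑_{t≠k} |h_{k,i} p_t|²) V + V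
    (heq36 : ∀ k l i, l ≤ i →
      (α k l : ℂ) * (starRingEnd ℂ) (∑ m, h k i m * p k m)
        = (∑ j ∈ univ.filter (fun j => l ≤ j), (α k j : ℂ))
            * (Complex.normSq (∑ m, h k i m * p k m) : ℂ) * V k i l
          + (∑ t ∈ univ.filter (fun t => t ≠ k),
              (Complex.normSq (∑ m, h k i m * p t m) : ℂ)) * V k i l
          + V k i l)
    -- precoder stationarity equation (38), componentwise in m:
    (heq38 : ∀ k m,
      ∑ l, ∑ i ∈ univ.filter (fun i => l ≤ i),
          (η k i l : ℂ) * (b k i l : ℂ) * (starRingEnd ℂ) (h k i m)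
            * (starRingEnd ℂ) (V k i l) * (α k l : ℂ)
        = (∑ l, ∑ i ∈ univ.filter (fun i => l ≤ i), ∑ j ∈ univ.filter (fun j => l ≤ j),
              (α k j : ℂ) * (η k i l : ℂ) * (b k i l : ℂ) * (starRingEnd ℂ) (h k i m)
                * (Complex.normSq (V k i l) : ℂ) * (∑ m', h k i m' * p k m'))
          + (∑ t ∈ univ.filter (fun t => t ≠ k), ∑ l, ∑ i ∈ univ.filter (fun i => l ≤ i),
              (η t i l : ℂ) * (b t i l : ℂ) * (starRingEnd ℂ) (h t i m)
                * (Complex.normSq (V t i l) : ℂ) * (∑ m', h t i m' * p k m'))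
          + (β : ℂ) * p k m) :
    β = E⁻¹ * ∑ k, ∑ l, ∑ i ∈ univ.filter (fun i => l ≤ i),
          η k i l * b k i l * Complex.normSq (V k i l) := by
  have hW : linkSum (fun k i l => (η k i l : ℂ) * b k i l * Complex.normSq (V k i l))
      = β * E :=
    add_left_cancel ((linkSum_receiver_trace α h p V b η _ _ heq36).symm.trans
      (linkSum_precoder_trace α h p V b η β E hpow heq38))
  have hW' : ∑ k, ∑ l, ∑ i ∈ univ.filter (fun i => l ≤ i),
      η k i l * b k i l * Complex.normSq (V k i l) = β * E := by
    simp only [linkSum] at hW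
    exact_mod_cast hW
  rw [hW', mul_comm β E, inv_mul_cancel_left₀ hE.ne']

theorem stmt_18 (K L M : ℕ)
    (α : Fin K → Fin L → ℝ) (hα : ∀ k l, 0 < α k l)
    (h : Fin K → Fin L → Fin M → ℂ) (p : Fin K → Fin M → ℂ)
    (V : Fin K → Fin L → Fin L → ℂ)
    (b η : Fin K → Fin L → Fin L → ℝ)
    (hb : ∀ k i l, 0 < b k i l) (hη : ∀ k i l, 0 ≤ η k i l)
    (E β : ℝ) (hE : 0 < E)
    -- total power constraint Tr(P Pᴴ) = E
    (hpow : ∑ k, ∑ m, Complex.normSq (p k m) = E)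
    -- receiver stationarity equation (36):
    -- α_{k,l} p_kᴴ h_{k,i}ᴴ = (∑_{j=l}^{L} α_{k,j}) |h_{k,i} p_k|² V + (∑_{t≠k} |h_{k,i} p_t|²) V + V
    (heq36 : ∀ k l i, l ≤ i →
      (α k l : ℂ) * (starRingEnd ℂ) (∑ m, h k i m * p k m)
        = (∑ j ∈ univ.filter (fun j => l ≤ j), (α k j : ℂ))
            * (Complex.normSq (∑ m, h k i m * p k m) : ℂ) * V k i l
          + (∑ t ∈ univ.filter (fun t => t ≠ k),
              (Complex.normSq (∑ m, h k i m * p t m) : ℂ)) * V k i l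
          + V k i l)
    -- precoder stationarity equation (38), componentwise in m:
    (heq38 : ∀ k m,
      ∑ l, ∑ i ∈ univ.filter (fun i => l ≤ i),
          (η k i l : ℂ) * (b k i l : ℂ) * (starRingEnd ℂ) (h k i m)
            * (starRingEnd ℂ) (V k i l) * (α k l : ℂ)
        = (∑ l, ∑ i ∈ univ.filter (fun i => l ≤ i), ∑ j ∈ univ.filter (fun j => l ≤ j),
              (α k j : ℂ) * (η k i l : ℂ) * (b k i l : ℂ) * (starRingEnd ℂ) (h k i m)
                * (Complex.normSq (V k i l) : ℂ) * (∑ m', h k i m' * p k m'))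
          + (∑ t ∈ univ.filter (fun t => t ≠ k), ∑ l, ∑ i ∈ univ.filter (fun i => l ≤ i),
              (η t i l : ℂ) * (b t i l : ℂ) * (starRingEnd ℂ) (h t i m)
                * (Complex.normSq (V t i l) : ℂ) * (∑ m', h t i m' * p k m'))
          + (β : ℂ) * p k m) :
    β = E⁻¹ * ∑ k, ∑ l, ∑ i ∈ univ.filter (fun i => l ≤ i),
          η k i l * b k i l * Complex.normSq (V k i l) :=
  stmt_18_general K L M α h p V b η E β hE hpow heq36 heq38
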